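/- arXiv:2509.03023 — 3 statements merged into one kernel-verified Lean document; each statement's English description precedes it below -/
import Mathlib

section
/- Let X ⊆ ℤ² be finite, nonempty, c_i-connected, and row-convex, where i ∈ {1,2}. Then (X,c_i) is i-contractible. -/
/-!
Both cases contract `X` through maps that move each point by at most one step.

For `c₁`, choose in every row above the lowest one a column where it meets the row below (a
`c₁`-path leaving the row downwards must step straight down). The map that drops a point to
the row below when it can, and otherwise moves it one step along its row towards that column,
is `c₁`-continuous by row-convexity and decreases a potential, so it contracts `X` after
finitely many iterations.

For `c₂`, an end `p` of the top row is dominated by another point `q` of `X`: every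
`c₂`-neighbour of `p` in `X` is a neighbour of `q`. Retracting `p` onto `q` is a single
homotopy step and keeps `X` row-convex and `c₂`-connected, so induction on `|X|` applies.
-/

/-- Points of the digital plane. -/
abbrev Pt : Type := ℤ × ℤ

/-- `c_i`-adjacency on `ℤ²` (for `i = 1` or `i = 2`). -/
def cAdj (i : ℕ) (x y : Pt) : Prop :=
  if i = 1 then |x.1 - y.1| + |x.2 - y.2| ≤ 1
  else |x.1 - y.1| ≤ 1 ∧ |x.2 - y.2| ≤ 1

/-- The adjacency induced on a subset of `ℤ²`. -/
def subAdj (i : ℕ) (X : Set Pt) (x y : X) : Prop := cAdj i x.1 y.1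

/-- Digital continuity of a map between digital images. -/
def DigCont {α β : Type} (κ : α → α → Prop) (δ : β → β → Prop) (f : α → β) : Prop :=
  ∀ x y, κ x y → δ (f x) (f y)

/-- The standard (`c_1`) adjacency on `ℕ`, used for digital intervals. -/
def natAdj (s t : ℕ) : Prop := s = t ∨ s + 1 = t ∨ t + 1 = s

/-- The two normal product adjacencies on `α × ℕ`. -/
def prodAdj (i : ℕ) {α : Type} (κ : α → α → Prop) (p q : α × ℕ) : Prop :=
  if i = 1 then (κ p.1 q.1 ∧ p.2 = q.2) ∨ (p.1 = q.1 ∧ natAdj p.2 q.2)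
  else κ p.1 q.1 ∧ natAdj p.2 q.2

/-- `f` and `g` are `i`-homotopic: there is a continuous
`H : X ×_i [0,m]_ℤ → Y` with `H(·,0) = f` and `H(·,m) = g`. -/
def Homotopic (i : ℕ) {α β : Type} (κ : α → α → Prop) (δ : β → β → Prop)
    (f g : α → β) : Prop :=
  ∃ (m : ℕ) (H : α → ℕ → β),
    (∀ x, H x 0 = f x) ∧ (∀ x, H x m = g x) ∧
    (∀ x y s t, s ≤ m → t ≤ m → prodAdj i κ (x, s) (y, t) → δ (H x s) (H y t))

/-- `i`-homotopy equivalence of digital images. -/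
def HtpyEquiv (i : ℕ) {α β : Type} (κ : α → α → Prop) (δ : β → β → Prop) : Prop :=
  ∃ (f : α → β) (g : β → α),
    DigCont κ δ f ∧ DigCont δ κ g ∧
    Homotopic i κ κ (g ∘ f) id ∧ Homotopic i δ δ (f ∘ g) id

/-- Homotopy equivalence of digital pictures `(X, c_i, c_j)` and `(Y, c_i, c_j)`. -/
def PicHtpyEquiv (i j : ℕ) (X Y : Set Pt) : Prop :=
  HtpyEquiv i (subAdj i X) (subAdj i Y) ∧ HtpyEquiv j (subAdj j Xᶜ) (subAdj j Yᶜ)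

/-- Isomorphism of digital images: a continuous bijection with continuous inverse. -/
def DigIso {α β : Type} (κ : α → α → Prop) (δ : β → β → Prop) : Prop :=
  ∃ e : α ≃ β, DigCont κ δ ⇑e ∧ DigCont δ κ ⇑e.symm

/-- Isomorphism of digital pictures. -/
def PicIso (i j : ℕ) (X Y : Set Pt) : Prop :=
  DigIso (subAdj i X) (subAdj i Y) ∧ DigIso (subAdj j Xᶜ) (subAdj j Yᶜ)

/-- `x` and `y` are joined by a `c_i`-path inside `A`. -/
def ChainIn (i : ℕ) (A : Set Pt) (x y : Pt) : Prop :=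
  ∃ (n : ℕ) (c : ℕ → Pt), c 0 = x ∧ c n = y ∧ (∀ k ≤ n, c k ∈ A) ∧
    ∀ k < n, cAdj i (c k) (c (k + 1))

/-- `A` is `c_i`-connected. -/
def Conn (i : ℕ) (A : Set Pt) : Prop := ∀ x ∈ A, ∀ y ∈ A, ChainIn i A x y

/-- The `c_i`-component of `p` in `A`. -/
def compOf (i : ℕ) (A : Set Pt) (p : Pt) : Set Pt := {y | ChainIn i A p y}

/-- The digital picture `(X, c_i, c_j)` has no hole: every `c_j`-component
of the complement of `X` is infinite. -/
def NoHole (j : ℕ) (X : Set Pt) : Prop := ∀ p ∈ Xᶜ, (compOf j Xᶜ p).Infinite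

/-- The row of `X` at height `k`. -/
def rowOf (X : Set Pt) (k : ℤ) : Set Pt := X ∩ {p | p.2 = k}

/-- `r` is a row component of `(X, c_i)`: a `c_i`-component of a row of `X`. -/
def IsRowComp (i : ℕ) (X : Set Pt) (r : Set Pt) : Prop :=
  ∃ (k : ℤ) (p : Pt), p ∈ rowOf X k ∧ r = compOf i (rowOf X k) p

/-- Two subsets of `ℤ²` are `c_i`-adjacent. -/
def setAdj (i : ℕ) (A B : Set Pt) : Prop := ∃ a ∈ A, ∃ b ∈ B, cAdj i a b

/-- The edge relation of the row component graph `R(X, c_i)`: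
two distinct row components joined when they are `c_i`-adjacent. -/
def rcgAdj (i : ℕ) (X : Set Pt) (r s : Set Pt) : Prop :=
  IsRowComp i X r ∧ IsRowComp i X s ∧ r ≠ s ∧ setAdj i r s

/-- The row component graph `R(X, c_i)` is acyclic: there is no cycle of
`k ≥ 3` distinct row components with consecutive ones adjacent. -/
def RCGAcyclic (i : ℕ) (X : Set Pt) : Prop :=
  ¬ ∃ (k : ℕ) (r : ℕ → Set Pt), 3 ≤ k ∧
    (∀ t < k, IsRowComp i X (r t)) ∧
    (∀ t < k, ∀ t' < k, r t = r t' → t = t') ∧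
    (∀ t, t + 1 < k → rcgAdj i X (r t) (r (t + 1))) ∧
    rcgAdj i X (r (k - 1)) (r 0)

/-- The row component graph `R(X, c_i)` is connected. -/
def RCGConnected (i : ℕ) (X : Set Pt) : Prop :=
  ∀ r s : Set Pt, IsRowComp i X r → IsRowComp i X s →
    Relation.ReflTransGen (rcgAdj i X) r s

/-- A digital image is `i`-contractible: the identity is `i`-homotopic to a constant map. -/
def Contractible (i : ℕ) {α : Type} (κ : α → α → Prop) : Prop :=
  ∃ x₀ : α, Homotopic i κ κ id (fun _ => x₀)

/-- Row-convexity. -/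
def RowConvex (X : Set Pt) : Prop :=
  ∀ a b c k : ℤ, (a, k) ∈ X → (c, k) ∈ X → a ≤ b → b ≤ c → (b, k) ∈ X

/-- Column-convexity. -/
def ColConvex (X : Set Pt) : Prop :=
  ∀ a b c k : ℤ, (k, a) ∈ X → (k, c) ∈ X → a ≤ b → b ≤ c → (k, b) ∈ X

/-- The row-convex hull of `X`. -/
def Hr (X : Set Pt) : Set Pt := ⋂₀ {S | RowConvex S ∧ X ⊆ S}

/-- The column-convex hull of `X`. -/
def Hc (X : Set Pt) : Set Pt := ⋂₀ {S | ColConvex S ∧ X ⊆ S}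

/-- The rc-convex hull of `X`. -/
def Hrc (X : Set Pt) : Set Pt := ⋂₀ {S | (RowConvex S ∧ ColConvex S) ∧ X ⊆ S}

/-- A loop of length `m` inside `Z`: a continuous `γ : [0,m]_ℤ → Z` with `γ 0 = γ m`. -/
def LoopIn (j : ℕ) (Z : Set Pt) (m : ℕ) (γ : ℕ → Pt) : Prop :=
  γ 0 = γ m ∧ (∀ t ≤ m, γ t ∈ Z) ∧ ∀ t < m, cAdj j (γ t) (γ (t + 1))

/-- The loop `γ` is `j`-contractible in `Z`: there is a `j`-homotopy in `Z` from `γ`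
to the constant loop at `γ 0` whose every stage is a loop based at `γ 0`. -/
def LoopContractibleIn (j : ℕ) (Z : Set Pt) (m : ℕ) (γ : ℕ → Pt) : Prop :=
  ∃ (K : ℕ) (H : ℕ → ℕ → Pt),
    (∀ t, H t 0 = γ t) ∧ (∀ t, H t K = γ 0) ∧
    (∀ k ≤ K, H 0 k = γ 0 ∧ H m k = γ 0) ∧
    (∀ t ≤ m, ∀ k ≤ K, H t k ∈ Z) ∧
    (∀ s t k l, s ≤ m → t ≤ m → k ≤ K → l ≤ K →
      prodAdj j natAdj (s, k) (t, l) → cAdj j (H s k) (H t l))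

/-- The union of the infinite `c_j`-components of the complement of `X`. -/
def InfPart (j : ℕ) (X : Set Pt) : Set Pt := {p | p ∈ Xᶜ ∧ (compOf j Xᶜ p).Infinite}

/-- The outer perimeter of the digital picture `(X, c_i, c_j)`: the least length of a
non-`j`-contractible loop in the infinite component of the complement of `X`, or `1`
if no such loop exists.  (It depends only on `j` and `X`.) -/
noncomputable def outerPerim (j : ℕ) (X : Set Pt) : ℕ := by
  classical
  exact if (∃ m γ, LoopIn j (InfPart j X) m γ ∧ ¬ LoopContractibleIn j (InfPart j X) m γ)
    then sInf {m | ∃ γ, LoopIn j (InfPart j X) m γ ∧ ¬ LoopContractibleIn j (InfPart j X) m γ}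
    else 1

/-- The digital rectangle `I_{n,m} = [1,n]_ℤ × [1,m]_ℤ`. -/
def Irect (n m : ℤ) : Set Pt := Set.Icc 1 n ×ˢ Set.Icc 1 m

/-- A finite digital image is `i`-reducible when it is `i`-homotopy equivalent to a
digital image with strictly fewer points. -/
def Reducible (i : ℕ) {α : Type} (κ : α → α → Prop) : Prop :=
  ∃ (β : Type) (δ : β → β → Prop), Reflexive δ ∧ Symmetric δ ∧ Finite β ∧
    Nat.card β < Nat.card α ∧ HtpyEquiv i κ δ

open Set

lemma cAdj_one_iff (p q : Pt) :
    cAdj 1 p q ↔ (p.1 - q.1).natAbs + (p.2 - q.2).natAbs ≤ 1 := by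
  simp only [cAdj, if_true, Int.abs_eq_natAbs]
  omega

lemma cAdj_two_iff (p q : Pt) :
    cAdj 2 p q ↔ (p.1 - q.1).natAbs ≤ 1 ∧ (p.2 - q.2).natAbs ≤ 1 := by
  simp only [cAdj, OfNat.ofNat_ne_one, if_false, Int.abs_eq_natAbs]
  omega

lemma cAdj_refl (i : ℕ) (p : Pt) : cAdj i p p := by
  unfold cAdj; split <;> simp

lemma cAdj_symm {i : ℕ} {p q : Pt} (h : cAdj i p q) : cAdj i q p := by
  unfold cAdj at *
  rwa [abs_sub_comm q.1, abs_sub_comm q.2]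

lemma ChainIn.exists_adj_boundary {i : ℕ} {A : Set Pt} {x y : Pt} (h : ChainIn i A x y)
    (P : Pt → Prop) (hx : P x) (hy : ¬ P y) :
    ∃ a ∈ A, ∃ b ∈ A, P a ∧ ¬ P b ∧ cAdj i a b := by
  obtain ⟨n, c, rfl, rfl, hmem, hadj⟩ := h
  induction n with
  | zero => exact absurd hx hy
  | succ n ih =>
    by_cases hn : P (c n)
    · exact ⟨c n, hmem n (by omega), c (n + 1), hmem _ le_rfl, hn, hy, hadj n (by omega)⟩
    · exact ih hn (fun k hk => hmem k (by omega)) (fun k hk => hadj k (by omega))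

lemma Conn.exists_adj_ne {i : ℕ} {X : Set Pt} (hconn : Conn i X) {p y : Pt} (hp : p ∈ X)
    (hy : y ∈ X) (hyp : y ≠ p) : ∃ v ∈ X, v ≠ p ∧ cAdj i v p := by
  obtain ⟨a, -, v, hv, rfl, hvp, hav⟩ :=
    (hconn p hp y hy).exists_adj_boundary (· = p) rfl hyp
  exact ⟨v, hv, hvp, cAdj_symm hav⟩

/-- A contraction of `X` onto `x₀`, as a homotopy defined and continuous on all of `X × ℕ`. -/
def ContractsTo (i : ℕ) (X : Set Pt) (x₀ : Pt) : Prop :=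
  ∃ (m : ℕ) (H : Pt → ℕ → Pt),
    (∀ p ∈ X, H p 0 = p) ∧ (∀ p ∈ X, H p m = x₀) ∧ (∀ p ∈ X, ∀ t, H p t ∈ X) ∧
    ∀ p ∈ X, ∀ q ∈ X, ∀ s t, prodAdj i (cAdj i) (p, s) (q, t) → cAdj i (H p s) (H q t)

lemma ContractsTo.contractible {i : ℕ} {X : Set Pt} {x₀ : Pt} (hx₀ : x₀ ∈ X)
    (h : ContractsTo i X x₀) : Contractible i (subAdj i X) := by
  obtain ⟨m, H, h0, hm, hmem, hadj⟩ := h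
  refine ⟨⟨x₀, hx₀⟩, m, fun x t => ⟨H x t, hmem x x.2 t⟩,
    fun x => Subtype.ext (h0 x x.2), fun x => Subtype.ext (hm x x.2), ?_⟩
  intro x y s t _ _ hxy
  refine hadj x x.2 y y.2 s t ?_
  unfold prodAdj at hxy ⊢
  split_ifs at hxy ⊢
  · exact hxy.imp id (And.imp_left (congrArg Subtype.val))
  · exact hxy

lemma contractsTo_singleton (i : ℕ) (x₀ : Pt) : ContractsTo i {x₀} x₀ := by
  refine ⟨0, fun p _ => p, fun p _ => rfl, fun p hp => hp, fun p hp _ => hp, ?_⟩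
  rintro p rfl q rfl s t -
  exact cAdj_refl i _

lemma prodAdj_two_iff {α : Type} (κ : α → α → Prop) (p q : α × ℕ) :
    prodAdj 2 κ p q ↔ κ p.1 q.1 ∧ natAdj p.2 q.2 := by
  simp [prodAdj]

section Retract

variable {i : ℕ} {X Y : Set Pt} {r : Pt → Pt}

lemma cAdj_retract (hYX : Y ⊆ X) (hr : MapsTo r X Y)
    (hstep : ∀ z ∈ X, ∀ w ∈ X, cAdj i z w → cAdj i z (r w)) :
    ∀ z ∈ X, ∀ w ∈ X, cAdj i z w → cAdj i (r z) (r w) := fun z hz w hw h =>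
  cAdj_symm (hstep _ (hYX (hr hw)) z hz (cAdj_symm (hstep z hz w hw h)))

lemma Conn.of_retract (hconn : Conn i X) (hYX : Y ⊆ X) (hr : MapsTo r X Y)
    (hfix : ∀ y ∈ Y, r y = y) (hcont : ∀ z ∈ X, ∀ w ∈ X, cAdj i z w → cAdj i (r z) (r w)) :
    Conn i Y := by
  intro x hx y hy
  obtain ⟨n, c, rfl, rfl, hmem, hadj⟩ := hconn _ (hYX hx) _ (hYX hy)
  exact ⟨n, r ∘ c, hfix _ hx, hfix _ hy, fun k hk => hr (hmem k hk),
    fun k hk => hcont _ (hmem k hk.le) _ (hmem _ hk) (hadj k hk)⟩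

/-- Precompose a contraction of `Y` with a retraction `r` that is one `2`-homotopy step
away from the identity. -/
lemma ContractsTo.of_retract_two {x₀ : Pt} (hY : ContractsTo 2 Y x₀) (hYX : Y ⊆ X)
    (hr : MapsTo r X Y) (hstep : ∀ z ∈ X, ∀ w ∈ X, cAdj 2 z w → cAdj 2 z (r w)) :
    ContractsTo 2 X x₀ := by
  obtain ⟨m, H, h0, hm, hmem, hadj⟩ := hY
  refine ⟨m + 1, fun z t => if t = 0 then z else H (r z) (t - 1), fun z _ => if_pos rfl,
    fun z hz => by simp [hm _ (hr hz)], fun z hz t => ?_, fun z hz w hw s t hzw => ?_⟩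
  · dsimp only
    split_ifs
    exacts [hz, hYX (hmem _ (hr hz) _)]
  · rw [prodAdj_two_iff] at hzw
    obtain ⟨hzw, hst⟩ := hzw
    dsimp only at hst ⊢
    unfold natAdj at hst
    split_ifs with hs ht ht
    · exact hzw
    · obtain rfl : t = 1 := by omega
      rw [h0 _ (hr hw)]
      exact hstep z hz w hw hzw
    · obtain rfl : s = 1 := by omega
      rw [h0 _ (hr hz)]
      exact cAdj_symm (hstep w hw z hz (cAdj_symm hzw))
    · refine hadj _ (hr hz) _ (hr hw) _ _ ((prodAdj_two_iff _ _ _).2 ⟨?_, ?_⟩)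
      · exact cAdj_retract hYX hr hstep z hz w hw hzw
      · unfold natAdj
        omega

end Retract

def Dominates (X : Set Pt) (q p : Pt) : Prop := ∀ w ∈ X, cAdj 2 w p → cAdj 2 w q

section Dominates

variable {X : Set Pt} {p q : Pt}

lemma mapsTo_update_id (hq : q ∈ X) (hqp : q ≠ p) :
    MapsTo (Function.update id p q) X (X \ {p}) := by
  intro z hz
  rw [Function.update_apply]
  split_ifs with h
  exacts [⟨hq, hqp⟩, ⟨hz, h⟩]

lemma Dominates.cAdj_update_id (hdom : Dominates X q p) :
    ∀ z ∈ X, ∀ w ∈ X, cAdj 2 z w → cAdj 2 z (Function.update id p q w) := by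
  intro z hz w _ hzw
  rw [Function.update_apply]
  split_ifs with h
  · exact hdom z hz (h ▸ hzw)
  · exact hzw

lemma RowConvex.sdiff_singleton (hrc : RowConvex X) {d : ℤ} (hd : d.natAbs = 1)
    (hend : (p.1 + d, p.2) ∉ X) : RowConvex (X \ {p}) := by
  intro a b c k ha hc hab hbc
  refine ⟨hrc a b c k ha.1 hc.1 hab hbc, ?_⟩
  rintro rfl
  have hab' : a ≠ b := fun h => ha.2 (by rw [h]; rfl)
  have hbc' : b ≠ c := fun h => hc.2 (by rw [h]; rfl)
  exact hend (hrc a _ c k ha.1 hc.1 (by omega) (by omega))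

lemma dominates_below {k : ℤ} (htop : ∀ w ∈ X, w.2 ≤ k) (x : ℤ) :
    Dominates X (x, k - 1) (x, k) := by
  intro w hw hwp
  have := htop w hw
  rw [cAdj_two_iff] at hwp ⊢
  dsimp only at hwp ⊢
  omega

/-- If the cells beside and diagonally below `(x, k)` on the side `d` are missing, all
neighbours of `(x, k)` lie in the `2 × 2` block on the other side, so any of them dominates it. -/
lemma dominates_of_corner {k x d : ℤ} (htop : ∀ w ∈ X, w.2 ≤ k) (hd : d.natAbs = 1)
    (hside : (x + d, k) ∉ X) (hdiag : (x + d, k - 1) ∉ X) {v : Pt} (hv : v ∈ X)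
    (hvp : cAdj 2 v (x, k)) : Dominates X v (x, k) := by
  have block : ∀ w ∈ X, cAdj 2 w (x, k) →
      w.1 ≠ x + d ∧ (w.1 - x).natAbs ≤ 1 ∧ k - 1 ≤ w.2 ∧ w.2 ≤ k := by
    rintro ⟨w₁, w₂⟩ hw hwp
    rw [cAdj_two_iff] at hwp
    have := htop _ hw
    dsimp only at hwp this ⊢
    refine ⟨?_, by omega, by omega, this⟩
    rintro rfl
    obtain rfl | rfl : w₂ = k ∨ w₂ = k - 1 := by omega
    exacts [hside hw, hdiag hw]
  intro w hw hwp
  have hw' := block w hw hwp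
  have hv' := block v hv hvp
  rw [cAdj_two_iff]
  omega

lemma exists_dominated_rowEnd (hrc : RowConvex X) (hX : X.Finite) (hconn : Conn 2 X)
    (hnt : X.Nontrivial) :
    ∃ p ∈ X, ∃ q ∈ X, q ≠ p ∧ (∃ d : ℤ, d.natAbs = 1 ∧ (p.1 + d, p.2) ∉ X) ∧
      Dominates X q p := by
  obtain ⟨⟨x, k⟩, hxk, htop⟩ := exists_max_image X Prod.snd hX hnt.nonempty
  have hrow : {x | (x, k) ∈ X}.Finite := hX.preimage (Prod.mk_left_injective k).injOn
  obtain ⟨b, hb, hbmax⟩ := exists_max_image _ id hrow ⟨x, hxk⟩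
  obtain ⟨a, ha, hamin⟩ := exists_min_image _ id hrow ⟨x, hxk⟩
  have hright : (b + 1, k) ∉ X := fun h => by have := hbmax _ h; simp at this
  have hleft : (a + -1, k) ∉ X := fun h => by have := hamin _ h; simp at this
  have hnbr : ∀ p ∈ X, ∃ v ∈ X, v ≠ p ∧ cAdj 2 v p := by
    intro p hp
    obtain ⟨y, hy, z, hz, hyz⟩ := hnt
    by_cases hyp : y = p
    · exact hconn.exists_adj_ne hp hz (fun h => hyz (hyp.trans h.symm))
    · exact hconn.exists_adj_ne hp hy hyp
  by_cases hR : (b + 1, k - 1) ∈ X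
  · by_cases hL : (a + -1, k - 1) ∈ X
    · have hab : a ≤ b := hbmax _ ha
      refine ⟨(b, k), hb, (b, k - 1), hrc _ b _ _ hL hR (by omega) (by omega), by simp,
        ⟨1, rfl, hright⟩, dominates_below htop b⟩
    · obtain ⟨v, hv, hva, hvadj⟩ := hnbr _ ha
      exact ⟨(a, k), ha, v, hv, hva, ⟨-1, rfl, hleft⟩,
        dominates_of_corner htop rfl hleft hL hv hvadj⟩
  · obtain ⟨v, hv, hvb, hvadj⟩ := hnbr _ hb
    exact ⟨(b, k), hb, v, hv, hvb, ⟨1, rfl, hright⟩,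
      dominates_of_corner htop rfl hright hR hv hvadj⟩

end Dominates

theorem RowConvex.exists_contractsTo_two {X : Set Pt} (hrc : RowConvex X) (hX : X.Finite)
    (hne : X.Nonempty) (hconn : Conn 2 X) : ∃ x₀ ∈ X, ContractsTo 2 X x₀ := by
  obtain ⟨n, hn⟩ : ∃ n, X.ncard = n := ⟨_, rfl⟩
  induction n generalizing X with
  | zero => exact absurd hn ((ncard_pos hX).2 hne).ne'
  | succ n ih =>
    by_cases hsub : X.Subsingleton
    · obtain ⟨x₀, hx₀⟩ := hne
      rw [hsub.eq_singleton_of_mem hx₀]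
      exact ⟨x₀, rfl, contractsTo_singleton 2 x₀⟩
    obtain ⟨p, hp, q, hq, hqp, ⟨d, hd, hend⟩, hdom⟩ :=
      exists_dominated_rowEnd hrc hX hconn (not_subsingleton_iff.1 hsub)
    have hr := mapsTo_update_id hq hqp
    have hstep := hdom.cAdj_update_id
    have hconn' : Conn 2 (X \ {p}) := hconn.of_retract sdiff_subset hr
      (fun y hy => Function.update_of_ne hy.2 _ _) (cAdj_retract sdiff_subset hr hstep)
    obtain ⟨x₀, hx₀, h⟩ := ih (hrc.sdiff_singleton hd hend) hX.sdiff ⟨q, hq, hqp⟩ hconn'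
      (by rw [ncard_sdiff_singleton_of_mem hp]; omega)
    exact ⟨x₀, hx₀.1, h.of_retract_two sdiff_subset hr hstep⟩

lemma Conn.exists_vertical_adj {X : Set Pt} (hconn : Conn 1 X) {p q : Pt} (hp : p ∈ X)
    (hq : q ∈ X) (hqp : q.2 < p.2) : ∃ v, (v, p.2) ∈ X ∧ (v, p.2 - 1) ∈ X := by
  obtain ⟨a, ha, b, hb, hpa, hpb, hab⟩ :=
    (hconn p hp q hq).exists_adj_boundary (fun z => p.2 ≤ z.2) le_rfl (by omega)
  rw [cAdj_one_iff] at hab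
  obtain ⟨a₁, a₂⟩ := a
  obtain ⟨b₁, b₂⟩ := b
  dsimp only at hpa hpb hab
  obtain ⟨rfl, rfl, rfl⟩ : a₂ = p.2 ∧ b₂ = p.2 - 1 ∧ b₁ = a₁ := by omega
  exact ⟨_, ha, hb⟩

lemma iterate_eq_of_potential_lt {α : Type*} {X : Set α} {f : α → α} {x₀ : α} (Φ : α → ℕ)
    (hf : MapsTo f X X) (hfix : f x₀ = x₀) (hlt : ∀ p ∈ X, p ≠ x₀ → Φ (f p) < Φ p) :
    ∀ n, ∀ p ∈ X, Φ p ≤ n → f^[n] p = x₀ := by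
  intro n
  induction n with
  | zero =>
    intro p hp h0
    by_contra hpx
    exact absurd (hlt p hp hpx) (by omega)
  | succ n ih =>
    intro p hp hn
    by_cases hpx : p = x₀
    · rw [hpx, Function.iterate_fixed hfix]
    · rw [Function.iterate_succ_apply]
      exact ih _ (hf hp) (by have := hlt p hp hpx; omega)

lemma contractsTo_one_of_iterate {X : Set Pt} {f : Pt → Pt} {x₀ : Pt} {N : ℕ}
    (hf : MapsTo f X X) (hcont : ∀ p ∈ X, ∀ q ∈ X, cAdj 1 p q → cAdj 1 (f p) (f q))
    (hstep : ∀ p, cAdj 1 p (f p)) (hN : ∀ p ∈ X, f^[N] p = x₀) : ContractsTo 1 X x₀ := by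
  have hcont_iter : ∀ t, ∀ p ∈ X, ∀ q ∈ X, cAdj 1 p q → cAdj 1 (f^[t] p) (f^[t] q) := by
    intro t
    induction t with
    | zero => exact fun p _ q _ h => h
    | succ t ih =>
      intro p hp q hq h
      rw [Function.iterate_succ_apply', Function.iterate_succ_apply']
      exact hcont _ (hf.iterate t hp) _ (hf.iterate t hq) (ih p hp q hq h)
  refine ⟨N, fun p t => f^[t] p, fun p _ => rfl, hN, fun p hp t => hf.iterate t hp, ?_⟩
  intro p hp q hq s t hpq
  simp only [prodAdj, if_true, natAdj] at hpq
  rcases hpq with ⟨hpq, rfl⟩ | ⟨rfl, rfl | rfl | rfl⟩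
  · exact hcont_iter s p hp q hq hpq
  · exact cAdj_refl 1 _
  · dsimp only
    rw [Function.iterate_succ_apply']
    exact hstep _
  · dsimp only
    rw [Function.iterate_succ_apply']
    exact cAdj_symm (hstep _)

lemma cAdj_one_map_of_unit_steps {X : Set Pt} {f : Pt → Pt}
    (hright : ∀ x k, (x, k) ∈ X → (x + 1, k) ∈ X → cAdj 1 (f (x, k)) (f (x + 1, k)))
    (hup : ∀ x k, (x, k) ∈ X → (x, k + 1) ∈ X → cAdj 1 (f (x, k)) (f (x, k + 1))) :
    ∀ p ∈ X, ∀ q ∈ X, cAdj 1 p q → cAdj 1 (f p) (f q) := by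
  rintro ⟨x, k⟩ hp ⟨y, l⟩ hq hpq
  rw [cAdj_one_iff] at hpq
  dsimp only at hpq
  obtain ⟨rfl, rfl⟩ | ⟨rfl, rfl⟩ | ⟨rfl, rfl⟩ | ⟨rfl, rfl⟩ | ⟨rfl, rfl⟩ :
      (y = x ∧ l = k) ∨ (y = x + 1 ∧ l = k) ∨ (x = y + 1 ∧ k = l) ∨ (y = x ∧ l = k + 1) ∨
        (x = y ∧ k = l + 1) := by omega
  · exact cAdj_refl 1 _
  · exact hright _ _ hp hq
  · exact cAdj_symm (hright _ _ hq hp)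
  · exact hup _ _ hp hq
  · exact cAdj_symm (hup _ _ hq hp)

def stepToward (t x : ℤ) : ℤ := if x < t then x + 1 else if t < x then x - 1 else x

lemma RowConvex.stepToward_mem {X : Set Pt} (hrc : RowConvex X) {x t k : ℤ} (hx : (x, k) ∈ X)
    (ht : (t, k) ∈ X) : (stepToward t x, k) ∈ X := by
  unfold stepToward
  split_ifs
  · exact hrc x _ t k hx ht (by omega) (by omega)
  · exact hrc t _ x k ht hx (by omega) (by omega)
  · exact hx

section Flow

variable (X : Set Pt) (u : ℤ → ℤ)

open Classical in
/-- Drop to the row below when possible, otherwise step along the row towards column `u k`;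
above the bottom row, `u k` is chosen where row `k` meets the row below. -/
noncomputable def flow (p : Pt) : Pt :=
  if (p.1, p.2 - 1) ∈ X then (p.1, p.2 - 1) else (stepToward (u p.2) p.1, p.2)

/-- `W` will bound the width of `X`, so that a drop outweighs any horizontal distance. -/
def flowPotential (k₀ : ℤ) (W : ℕ) (p : Pt) : ℕ :=
  (W + 1) * (p.2 - k₀).toNat + (p.1 - u p.2).natAbs

variable {X u} {k₀ : ℤ}

lemma cAdj_flow (p : Pt) : cAdj 1 p (flow X u p) := by
  unfold flow stepToward
  rw [cAdj_one_iff]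
  split_ifs <;> omega

lemma flow_mapsTo (hrc : RowConvex X) (hrow : ∀ p ∈ X, (u p.2, p.2) ∈ X) :
    MapsTo (flow X u) X X := by
  intro p hp
  unfold flow
  split_ifs with h
  exacts [h, hrc.stepToward_mem hp (hrow p hp)]

variable (hk₀ : ∀ p ∈ X, k₀ ≤ p.2) (hportal : ∀ p ∈ X, k₀ < p.2 → (u p.2, p.2 - 1) ∈ X)
include hk₀ hportal

lemma flow_cAdj_flow (hrc : RowConvex X) :
    ∀ p ∈ X, ∀ q ∈ X, cAdj 1 p q → cAdj 1 (flow X u p) (flow X u q) := by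
  refine cAdj_one_map_of_unit_steps (fun x k hx hx' => ?_) (fun x k hx _ => ?_)
  · have hu : (x, k - 1) ∈ X ∨ (x + 1, k - 1) ∈ X → (u k, k - 1) ∈ X := by
      rintro (h | h)
      exacts [hportal _ hx (by have := hk₀ _ h; dsimp only at this; omega),
        hportal _ hx (by have := hk₀ _ h; dsimp only at this; omega)]
    simp only [flow, cAdj_one_iff, stepToward]
    by_cases h₁ : (x, k - 1) ∈ X <;> by_cases h₂ : (x + 1, k - 1) ∈ X <;>
      simp only [h₁, h₂, if_true, if_false]
    · omega
    · have : u k ≤ x := by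
        by_contra
        exact h₂ (hrc x _ (u k) _ h₁ (hu (.inl h₁)) (by omega) (by omega))
      split_ifs <;> omega
    · have : x + 1 ≤ u k := by
        by_contra
        exact h₁ (hrc (u k) _ (x + 1) _ (hu (.inr h₂)) h₂ (by omega) (by omega))
      split_ifs <;> omega
    · split_ifs <;> omega
  · have hdrop : flow X u (x, k + 1) = (x, k) := by simp [flow, hx]
    rw [hdrop]
    exact cAdj_symm (cAdj_flow _)

omit hportal in
lemma flow_base : flow X u (u k₀, k₀) = (u k₀, k₀) := by
  have : (u k₀, k₀ - 1) ∉ X := fun h => by have := hk₀ _ h; dsimp only at this; omega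
  simp [flow, this, stepToward]

lemma flowPotential_flow_lt {W : ℕ} (hrow : ∀ p ∈ X, (u p.2, p.2) ∈ X)
    (hW : ∀ p ∈ X, ∀ q ∈ X, (p.1 - q.1).natAbs ≤ W) {p : Pt} (hp : p ∈ X)
    (hpx : p ≠ (u k₀, k₀)) :
    flowPotential u k₀ W (flow X u p) < flowPotential u k₀ W p := by
  obtain ⟨x, k⟩ := p
  have hk := hk₀ _ hp
  dsimp only at hk
  unfold flow flowPotential
  split_ifs with h <;> dsimp only
  · have hwidth := hW _ h _ (hrow _ h)
    have hlow := hk₀ _ h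
    dsimp only at hwidth hlow
    rw [show (k - k₀).toNat = (k - 1 - k₀).toNat + 1 by omega, Nat.mul_succ]
    omega
  · have hxu : x ≠ u k := by
      rintro rfl
      rcases hk.lt_or_eq with hlt | rfl
      · exact h (hportal _ hp hlt)
      · exact hpx rfl
    unfold stepToward
    split_ifs <;> omega

end Flow

theorem RowConvex.exists_contractsTo_one {X : Set Pt} (hrc : RowConvex X) (hX : X.Finite)
    (hne : X.Nonempty) (hconn : Conn 1 X) : ∃ x₀ ∈ X, ContractsTo 1 X x₀ := by
  obtain ⟨⟨x, k₀⟩, hx, hk₀⟩ := exists_min_image X Prod.snd hX hne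
  have hcolumn : ∀ k, ∃ v, ∀ p ∈ X, p.2 = k → (v, k) ∈ X ∧ (k₀ < k → (v, k - 1) ∈ X) := by
    intro k
    by_cases hk : ∃ p ∈ X, p.2 = k
    · obtain ⟨p, hp, rfl⟩ := hk
      rcases (hk₀ p hp).lt_or_eq with hlt | heq
      · obtain ⟨v, hv⟩ := hconn.exists_vertical_adj hp hx hlt
        exact ⟨v, fun _ _ _ => ⟨hv.1, fun _ => hv.2⟩⟩
      · exact ⟨p.1, fun _ _ _ => ⟨hp, fun h => absurd heq h.ne⟩⟩
    · exact ⟨0, fun p hp hpk => absurd ⟨p, hp, hpk⟩ hk⟩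
  choose u hu using hcolumn
  have hrow : ∀ p ∈ X, (u p.2, p.2) ∈ X := fun p hp => (hu _ p hp rfl).1
  have hportal : ∀ p ∈ X, k₀ < p.2 → (u p.2, p.2 - 1) ∈ X := fun p hp => (hu _ p hp rfl).2
  obtain ⟨M, hM⟩ := (hX.image Prod.fst).bddAbove
  obtain ⟨m, hm⟩ := (hX.image Prod.fst).bddBelow
  have hW : ∀ p ∈ X, ∀ q ∈ X, (p.1 - q.1).natAbs ≤ (M - m).toNat := by
    intro p hp q hq
    have := hM ⟨p, hp, rfl⟩
    have := hM ⟨q, hq, rfl⟩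
    have := hm ⟨p, hp, rfl⟩
    have := hm ⟨q, hq, rfl⟩
    omega
  obtain ⟨N, hN⟩ := (hX.image (flowPotential u k₀ (M - m).toNat)).bddAbove
  refine ⟨(u k₀, k₀), hrow _ hx, contractsTo_one_of_iterate (N := N) (flow_mapsTo hrc hrow)
    (flow_cAdj_flow hk₀ hportal hrc) cAdj_flow fun p hp => ?_⟩
  exact iterate_eq_of_potential_lt _ (flow_mapsTo hrc hrow) (flow_base hk₀)
    (fun q hq hqx => flowPotential_flow_lt hk₀ hportal hrow hW hq hqx) N p hp (hN ⟨p, hp, rfl⟩)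

/-- a finite, nonempty, `c_i`-connected, row-convex set is
`i`-contractible. -/
theorem stmt11 (i : ℕ) (hi : i = 1 ∨ i = 2) (X : Set Pt)
    (hX : X.Finite) (hne : X.Nonempty) (hconn : Conn i X) (hrc : RowConvex X) :
    Contractible i (subAdj i X) := by
  obtain ⟨x₀, hx₀, h⟩ : ∃ x₀ ∈ X, ContractsTo i X x₀ := by
    rcases hi with rfl | rfl
    exacts [hrc.exists_contractsTo_one hX hne hconn, hrc.exists_contractsTo_two hX hne hconn]
  exact h.contractible hx₀
end

section
/- If X ⊆ ℤ² is c₂-connected, then H_r(H_c(X)) = H_c(H_r(X)). -/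
/-!
Both hulls are explicit: `H_r(S)` consists of the points lying between two points of `S` on a
row, `H_c(S)` of those lying between two points of `S` on a column. Both inclusions then reduce
to one fact and its transpose: if `Y` is column-convex and c₂-connected, then `H_r(Y)` is
column-convex. It applies to `Y = H_c(X)`, which is c₂-connected since each of its points is
joined vertically to a point of `X`. For the fact, let `(k, a), (k, c) ∈ H_r(Y)` and `a ≤ b ≤ c`: a
c₂-path in `Y` from a point of row `a` left of column `k` to a point of row `c` left of column `k`
meets row `b` left of column `k`, and symmetrically on the right, so `(k, b) ∈ H_r(Y)`.
-/

open Relation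

section Chains

def ChainStep (i : ℕ) (A : Set Pt) (p q : Pt) : Prop := p ∈ A ∧ q ∈ A ∧ cAdj i p q

lemma cAdj_comm (i : ℕ) (x y : Pt) : cAdj i x y ↔ cAdj i y x := by
  unfold cAdj
  rw [abs_sub_comm x.1, abs_sub_comm x.2]

instance (i : ℕ) (A : Set Pt) : Std.Symm (ChainStep i A) where
  symm _ _ h := ⟨h.2.1, h.1, (cAdj_comm i _ _).1 h.2.2⟩

lemma ChainStep.mono {i : ℕ} {A B : Set Pt} (hAB : A ⊆ B) : ChainStep i A ≤ ChainStep i B :=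
  fun _ _ h => ⟨hAB h.1, hAB h.2.1, h.2.2⟩

lemma chainIn_iff_reflTransGen {i : ℕ} {A : Set Pt} {x y : Pt} :
    ChainIn i A x y ↔ x ∈ A ∧ ReflTransGen (ChainStep i A) x y := by
  constructor
  · rintro ⟨n, c, rfl, rfl, hmem, hadj⟩
    refine ⟨hmem 0 n.zero_le, ?_⟩
    suffices ∀ k ≤ n, ReflTransGen (ChainStep i A) (c 0) (c k) from this n le_rfl
    intro k
    induction k with
    | zero => exact fun _ => .refl
    | succ k ih =>
      exact fun hk => (ih (by omega)).tail ⟨hmem k (by omega), hmem (k + 1) hk, hadj k hk⟩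
  · rintro ⟨hx, h⟩
    induction h with
    | refl =>
      exact ⟨0, fun _ => x, rfl, rfl, fun _ _ => hx, fun _ hk => absurd hk (Nat.not_lt_zero _)⟩
    | @tail y z _ hyz ih =>
      obtain ⟨n, c, h0, hn, hmem, hadj⟩ := ih
      refine ⟨n + 1, Function.update c (n + 1) z, ?_, by simp, fun k hk => ?_, fun k hk => ?_⟩
      · rwa [Function.update_of_ne (by omega)]
      · rcases eq_or_lt_of_le hk with rfl | hk
        · simpa using hyz.2.1
        · rw [Function.update_of_ne (by omega)]
          exact hmem k (by omega)
      · rcases eq_or_lt_of_le (Nat.lt_succ_iff.1 hk) with rfl | hk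
        · simpa [Function.update_of_ne (Nat.succ_ne_self k).symm, hn] using hyz.2.2
        · rw [Function.update_of_ne (by omega), Function.update_of_ne (by omega)]
          exact hadj k hk

lemma conn_iff_reflTransGen {i : ℕ} {A : Set Pt} :
    Conn i A ↔ ∀ x ∈ A, ∀ y ∈ A, ReflTransGen (ChainStep i A) x y := by
  simp only [Conn, chainIn_iff_reflTransGen]
  exact forall₂_congr fun x hx => by simp [hx]

lemma reflTransGen_chainStep_vertical {A : Set Pt} {x u v : ℤ} (huv : u ≤ v)
    (hmem : ∀ t, u ≤ t → t ≤ v → (x, t) ∈ A) : ReflTransGen (ChainStep 2 A) (x, u) (x, v) := by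
  induction v, huv using Int.leInduction with
  | base => exact .refl
  | succ v huv ih =>
    refine (ih fun t h1 h2 => hmem t h1 (by omega)).tail
      ⟨hmem v huv (by omega), hmem (v + 1) (by omega) le_rfl, ?_⟩
    simp [cAdj]

end Chains

section Symmetries

lemma cAdj_swap (i : ℕ) (p q : Pt) : cAdj i p.swap q.swap ↔ cAdj i p q := by
  unfold cAdj
  split_ifs <;> simp [add_comm, and_comm]

lemma reflTransGen_chainStep_preimage {i : ℕ} {A : Set Pt} {f : Pt → Pt}
    (hf : Function.Involutive f) (hadj : ∀ p q, cAdj i p q → cAdj i (f p) (f q)) {x y : Pt}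
    (h : ReflTransGen (ChainStep i A) x y) :
    ReflTransGen (ChainStep i (f ⁻¹' A)) (f x) (f y) := by
  refine ReflTransGen.lift f (fun p q hpq => ⟨?_, ?_, hadj p q hpq.2.2⟩) x y h
  · simpa only [Set.mem_preimage, hf p] using hpq.1
  · simpa only [Set.mem_preimage, hf q] using hpq.2.1

lemma Conn.preimage_swap {i : ℕ} {A : Set Pt} (hA : Conn i A) : Conn i (Prod.swap ⁻¹' A) := by
  rw [conn_iff_reflTransGen] at hA ⊢
  intro x hx y hy
  simpa using reflTransGen_chainStep_preimage Prod.swap_swap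
    (fun p q => (cAdj_swap i p q).2) (hA _ hx _ hy)

end Symmetries

section Hulls

def rowFill (S : Set Pt) : Set Pt :=
  {p | ∃ u v, u ≤ p.1 ∧ p.1 ≤ v ∧ (u, p.2) ∈ S ∧ (v, p.2) ∈ S}

def colFill (S : Set Pt) : Set Pt :=
  {p | ∃ u v, u ≤ p.2 ∧ p.2 ≤ v ∧ (p.1, u) ∈ S ∧ (p.1, v) ∈ S}

lemma rowConvex_rowFill (S : Set Pt) : RowConvex (rowFill S) := by
  rintro a b c k ⟨u, -, hu, -, hmu, -⟩ ⟨-, v, -, hv, -, hmv⟩ hab hbc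
  exact ⟨u, v, by omega, by omega, hmu, hmv⟩

lemma colConvex_colFill (S : Set Pt) : ColConvex (colFill S) := by
  rintro a b c k ⟨u, -, hu, -, hmu, -⟩ ⟨-, v, -, hv, -, hmv⟩ hab hbc
  exact ⟨u, v, by omega, by omega, hmu, hmv⟩

lemma subset_rowFill (S : Set Pt) : S ⊆ rowFill S :=
  fun p hp => ⟨p.1, p.1, le_rfl, le_rfl, hp, hp⟩

lemma subset_colFill (S : Set Pt) : S ⊆ colFill S :=
  fun p hp => ⟨p.2, p.2, le_rfl, le_rfl, hp, hp⟩

lemma rowFill_subset {S T : Set Pt} (hT : RowConvex T) (hST : S ⊆ T) : rowFill S ⊆ T :=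
  fun _ ⟨u, v, hu, hv, hmu, hmv⟩ => hT u _ v _ (hST hmu) (hST hmv) hu hv

lemma colFill_subset {S T : Set Pt} (hT : ColConvex T) (hST : S ⊆ T) : colFill S ⊆ T :=
  fun _ ⟨u, v, hu, hv, hmu, hmv⟩ => hT u _ v _ (hST hmu) (hST hmv) hu hv

lemma Hr_eq_rowFill (S : Set Pt) : Hr S = rowFill S :=
  subset_antisymm (Set.sInter_subset_of_mem ⟨rowConvex_rowFill S, subset_rowFill S⟩)
    fun _ hp => Set.mem_sInter.2 fun _ hT => rowFill_subset hT.1 hT.2 hp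

lemma Hc_eq_colFill (S : Set Pt) : Hc S = colFill S :=
  subset_antisymm (Set.sInter_subset_of_mem ⟨colConvex_colFill S, subset_colFill S⟩)
    fun _ hp => Set.mem_sInter.2 fun _ hT => colFill_subset hT.1 hT.2 hp

lemma rowFill_mono {S T : Set Pt} (h : S ⊆ T) : rowFill S ⊆ rowFill T :=
  fun _ ⟨u, v, hu, hv, hmu, hmv⟩ => ⟨u, v, hu, hv, h hmu, h hmv⟩

lemma colFill_mono {S T : Set Pt} (h : S ⊆ T) : colFill S ⊆ colFill T :=
  fun _ ⟨u, v, hu, hv, hmu, hmv⟩ => ⟨u, v, hu, hv, h hmu, h hmv⟩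

end Hulls

section Connectivity

lemma conn_colFill {X : Set Pt} (hX : Conn 2 X) : Conn 2 (colFill X) := by
  have hbase : ∀ p ∈ colFill X,
      ∃ u, (p.1, u) ∈ X ∧ ReflTransGen (ChainStep 2 (colFill X)) (p.1, u) p := by
    rintro p ⟨u, v, hu, hv, hmu, hmv⟩
    exact ⟨u, hmu, reflTransGen_chainStep_vertical hu
      fun t h1 h2 => ⟨u, v, h1, h2.trans hv, hmu, hmv⟩⟩
  rw [conn_iff_reflTransGen] at hX ⊢
  intro p hp q hq
  obtain ⟨u, hu, hup⟩ := hbase p hp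
  obtain ⟨v, hv, hvq⟩ := hbase q hq
  have huv := ReflTransGen.mono (ChainStep.mono (subset_colFill X)) _ _ (hX _ hu _ hv)
  exact (Std.Symm.symm _ _ hup).trans (huv.trans hvq)

/- `Prod.swap ⁻¹'` exchanges rows and columns definitionally: it turns `colFill` into `rowFill`
and `RowConvex` into `ColConvex`. -/
lemma conn_rowFill {X : Set Pt} (hX : Conn 2 X) : Conn 2 (rowFill X) :=
  (conn_colFill hX.preimage_swap).preimage_swap

end Connectivity

section Crossing

def negFst (p : Pt) : Pt := (-p.1, p.2)

lemma cAdj_negFst (i : ℕ) (p q : Pt) : cAdj i (negFst p) (negFst q) ↔ cAdj i p q := by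
  simp only [cAdj, negFst, neg_sub_neg, abs_sub_comm q.1]

/- While the path stays in the half-plane `x ≤ k` it cannot jump over the row `y = b`;
an excursion into `x > k` leaves and re-enters through the column `x = k`, whose points in `Y`
form an interval missing `(k, b)`, hence all lie on the same side of that row. -/
lemma exists_le_mem_row_of_reflTransGen {Y : Set Pt} (hY : ColConvex Y) {k b : ℤ} {P Q : Pt}
    (hP : P ∈ Y) (hPk : P.1 ≤ k) (hQk : Q.1 ≤ k) (hPb : P.2 ≤ b) (hQb : b ≤ Q.2)
    (h : ReflTransGen (ChainStep 2 Y) P Q) : ∃ w ≤ k, (w, b) ∈ Y := by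
  by_contra! hmiss
  have hoff : ∀ r ∈ Y, r.1 ≤ k → r.2 ≠ b := fun r hr hrk hrb =>
    hmiss r.1 hrk (by rw [← hrb]; exact hr)
  let below (p : Pt) : Prop := (p.1 ≤ k ∧ p.2 < b) ∨ (k < p.1 ∧ ∃ a < b, (k, a) ∈ Y)
  have hQ : below Q := by
    clear hQk hQb
    induction h with
    | refl => exact .inl ⟨hPk, lt_of_le_of_ne hPb (hoff P hP hPk)⟩
    | @tail q r _ hqr ih =>
      obtain ⟨hq, hr, hadj⟩ := hqr
      simp only [cAdj, if_neg (by norm_num : (2 : ℕ) ≠ 1), abs_le] at hadj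
      by_cases hrk : r.1 ≤ k
      · refine .inl ⟨hrk, lt_of_le_of_ne ?_ (hoff r hr hrk)⟩
        rcases ih with ⟨-, hqb⟩ | ⟨hkq, a, hab, ha⟩
        · omega
        · by_contra! hbr
          have hrk' : r.1 = k := by omega
          exact hmiss k le_rfl (hY a b r.2 k ha (by rw [← hrk']; exact hr) hab.le hbr.le)
      · refine .inr ⟨by omega, ?_⟩
        rcases ih with ⟨hqk, hqb⟩ | ⟨-, hk⟩
        · have hqk' : q.1 = k := by omega
          exact ⟨q.2, hqb, by rw [← hqk']; exact hq⟩
        · exact hk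
  rcases hQ with ⟨-, hQb'⟩ | ⟨hkQ, -⟩ <;> omega

lemma exists_ge_mem_row_of_reflTransGen {Y : Set Pt} (hY : ColConvex Y) {k b : ℤ} {P Q : Pt}
    (hP : P ∈ Y) (hPk : k ≤ P.1) (hQk : k ≤ Q.1) (hPb : P.2 ≤ b) (hQb : b ≤ Q.2)
    (h : ReflTransGen (ChainStep 2 Y) P Q) : ∃ w ≥ k, (w, b) ∈ Y := by
  obtain ⟨w, hw, hwb⟩ := exists_le_mem_row_of_reflTransGen (Y := negFst ⁻¹' Y) (k := -k)
    (P := negFst P) (Q := negFst Q)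
    (fun a b c x => hY a b c (-x)) (by simpa [negFst] using hP) (by simp only [negFst]; omega)
    (by simp only [negFst]; omega) hPb hQb
    (reflTransGen_chainStep_preimage (fun p => by simp [negFst])
      (fun p q => (cAdj_negFst 2 p q).2) h)
  exact ⟨-w, by omega, by simpa [negFst] using hwb⟩

lemma colConvex_rowFill {Y : Set Pt} (hY : ColConvex Y) (hconn : Conn 2 Y) :
    ColConvex (rowFill Y) := by
  rw [conn_iff_reflTransGen] at hconn
  rintro a b c k ⟨u₁, v₁, hu₁, hv₁, hmu₁, hmv₁⟩ ⟨u₂, v₂, hu₂, hv₂, hmu₂, hmv₂⟩ hab hbc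
  obtain ⟨u, hu, hmu⟩ := exists_le_mem_row_of_reflTransGen hY hmu₁ hu₁ hu₂ hab hbc
    (hconn _ hmu₁ _ hmu₂)
  obtain ⟨v, hv, hmv⟩ := exists_ge_mem_row_of_reflTransGen hY hmv₁ hv₁ hv₂ hab hbc
    (hconn _ hmv₁ _ hmv₂)
  exact ⟨u, v, hu, hv, hmu, hmv⟩

lemma rowConvex_colFill {Y : Set Pt} (hY : RowConvex Y) (hconn : Conn 2 Y) :
    RowConvex (colFill Y) :=
  colConvex_rowFill (Y := Prod.swap ⁻¹' Y) hY hconn.preimage_swap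

end Crossing

/-- if `X ⊆ ℤ²` is `c₂`-connected, then `H_r(H_c(X)) = H_c(H_r(X))`. -/
theorem stmt13 (X : Set Pt) (hconn : Conn 2 X) :
    Hr (Hc X) = Hc (Hr X) := by
  simp only [Hr_eq_rowFill, Hc_eq_colFill]
  apply subset_antisymm
  · exact rowFill_subset (rowConvex_colFill (rowConvex_rowFill X) (conn_rowFill hconn))
      (colFill_mono (subset_rowFill X))
  · exact colFill_subset (colConvex_rowFill (colConvex_colFill X) (conn_colFill hconn))
      (rowFill_mono (subset_colFill X))
end

section
/- If X ⊆ ℤ² is finite and c₂-connected, then H_rc(X) = H_r(H_c(X)) = H_c(H_r(X)). -/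
section Stmt15Aux

/-- Characterization of the row-convex hull. -/
lemma mem_Hr_iff (Y : Set Pt) (x y : ℤ) :
    (x, y) ∈ Hr Y ↔ ∃ a c : ℤ, (a, y) ∈ Y ∧ (c, y) ∈ Y ∧ a ≤ x ∧ x ≤ c := by
  constructor
  · intro hp
    have hmem : ({q : Pt | ∃ a c : ℤ, (a, q.2) ∈ Y ∧ (c, q.2) ∈ Y ∧ a ≤ q.1 ∧ q.1 ≤ c} : Set Pt)
        ∈ {S | RowConvex S ∧ Y ⊆ S} := by
      constructor
      · rintro a b c k ⟨a', c', h1, h2, h3, h4⟩ ⟨a'', c'', h1', h2', h3', h4'⟩ hab hbc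
        exact ⟨a', c'', h1, h2', le_trans h3 hab, le_trans hbc h4'⟩
      · intro q hq
        exact ⟨q.1, q.1, by simpa using hq, by simpa using hq, le_refl _, le_refl _⟩
    exact Set.mem_sInter.1 hp _ hmem
  · rintro ⟨a, c, ha, hc, h1, h2⟩
    refine Set.mem_sInter.2 ?_
    rintro S ⟨hS, hYS⟩
    exact hS a x c y (hYS ha) (hYS hc) h1 h2

/-- Characterization of the column-convex hull. -/
lemma mem_Hc_iff (Y : Set Pt) (x y : ℤ) :
    (x, y) ∈ Hc Y ↔ ∃ lo hi : ℤ, (x, lo) ∈ Y ∧ (x, hi) ∈ Y ∧ lo ≤ y ∧ y ≤ hi := by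
  constructor
  · intro hp
    have hmem : ({q : Pt | ∃ lo hi : ℤ, (q.1, lo) ∈ Y ∧ (q.1, hi) ∈ Y ∧ lo ≤ q.2 ∧ q.2 ≤ hi} : Set Pt)
        ∈ {S | ColConvex S ∧ Y ⊆ S} := by
      constructor
      · rintro a b c k ⟨a', c', h1, h2, h3, h4⟩ ⟨a'', c'', h1', h2', h3', h4'⟩ hab hbc
        exact ⟨a', c'', h1, h2', le_trans h3 hab, le_trans hbc h4'⟩
      · intro q hq
        exact ⟨q.2, q.2, by simpa using hq, by simpa using hq, le_refl _, le_refl _⟩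
    exact Set.mem_sInter.1 hp _ hmem
  · rintro ⟨lo, hi, ha, hc, h1, h2⟩
    refine Set.mem_sInter.2 ?_
    rintro S ⟨hS, hYS⟩
    exact hS lo y hi x (hYS ha) (hYS hc) h1 h2

lemma subset_Hr (Y : Set Pt) : Y ⊆ Hr Y :=
  fun _ hp => Set.mem_sInter.2 fun _ hS => hS.2 hp

lemma subset_Hc (Y : Set Pt) : Y ⊆ Hc Y :=
  fun _ hp => Set.mem_sInter.2 fun _ hS => hS.2 hp

lemma subset_Hrc (Y : Set Pt) : Y ⊆ Hrc Y :=
  fun _ hp => Set.mem_sInter.2 fun _ hS => hS.2 hp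

lemma Hr_min {Y S : Set Pt} (h1 : RowConvex S) (h2 : Y ⊆ S) : Hr Y ⊆ S :=
  fun _ hp => Set.mem_sInter.1 hp S ⟨h1, h2⟩

lemma Hc_min {Y S : Set Pt} (h1 : ColConvex S) (h2 : Y ⊆ S) : Hc Y ⊆ S :=
  fun _ hp => Set.mem_sInter.1 hp S ⟨h1, h2⟩

lemma Hrc_min {Y S : Set Pt} (h1 : RowConvex S) (h1' : ColConvex S) (h2 : Y ⊆ S) : Hrc Y ⊆ S :=
  fun _ hp => Set.mem_sInter.1 hp S ⟨⟨h1, h1'⟩, h2⟩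

lemma rowConvex_Hr (Y : Set Pt) : RowConvex (Hr Y) := by
  intro a b c k ha hc h1 h2
  refine Set.mem_sInter.2 fun S hS => ?_
  exact hS.1 a b c k (Set.mem_sInter.1 ha S hS) (Set.mem_sInter.1 hc S hS) h1 h2

lemma colConvex_Hc (Y : Set Pt) : ColConvex (Hc Y) := by
  intro a b c k ha hc h1 h2
  refine Set.mem_sInter.2 fun S hS => ?_
  exact hS.1 a b c k (Set.mem_sInter.1 ha S hS) (Set.mem_sInter.1 hc S hS) h1 h2

lemma rowConvex_Hrc (Y : Set Pt) : RowConvex (Hrc Y) := by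
  intro a b c k ha hc h1 h2
  refine Set.mem_sInter.2 fun S hS => ?_
  exact hS.1.1 a b c k (Set.mem_sInter.1 ha S hS) (Set.mem_sInter.1 hc S hS) h1 h2

lemma colConvex_Hrc (Y : Set Pt) : ColConvex (Hrc Y) := by
  intro a b c k ha hc h1 h2
  refine Set.mem_sInter.2 fun S hS => ?_
  exact hS.1.2 a b c k (Set.mem_sInter.1 ha S hS) (Set.mem_sInter.1 hc S hS) h1 h2

/-- Discrete intermediate value: first crossing. -/
lemma first_cross (f : ℕ → ℤ) (y : ℤ) (n : ℕ)
    (hstep : ∀ t < n, |f t - f (t + 1)| ≤ 1)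
    (h0 : f 0 ≤ y) (hn : y ≤ f n) :
    ∃ t, t ≤ n ∧ f t = y ∧ ∀ s < t, f s < y := by
  classical
  have hex : ∃ t, y ≤ f t ∧ t ≤ n := ⟨n, hn, le_refl n⟩
  let t := Nat.find hex
  have ht : y ≤ f t ∧ t ≤ n := Nat.find_spec hex
  have hmin : ∀ s < t, ¬(y ≤ f s ∧ s ≤ n) := fun s hs => Nat.find_min hex hs
  have hbef : ∀ s < t, f s < y := by
    intro s hs
    have hsn : s ≤ n := le_trans (le_of_lt hs) ht.2
    have := hmin s hs
    by_contra hcon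
    exact this ⟨le_of_not_gt hcon, hsn⟩
  refine ⟨t, ht.2, ?_, hbef⟩
  rcases Nat.eq_zero_or_pos t with h | h
  · rw [h]; exact le_antisymm h0 (h ▸ ht.1)
  · have h1 : f (t - 1) < y := hbef (t - 1) (by omega)
    have h2 : |f (t - 1) - f (t - 1 + 1)| ≤ 1 := hstep (t - 1) (by omega)
    have h4 : t - 1 + 1 = t := by omega
    rw [h4] at h2
    rw [abs_le] at h2
    exact le_antisymm (by omega) ht.1

/-- Discrete intermediate value: last crossing. -/
lemma last_cross (f : ℕ → ℤ) (y : ℤ) (n : ℕ)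
    (hstep : ∀ t < n, |f t - f (t + 1)| ≤ 1)
    (h0 : f 0 ≤ y) (hn : y ≤ f n) :
    ∃ t, t ≤ n ∧ f t = y ∧ ∀ s, t < s → s ≤ n → y < f s := by
  obtain ⟨t, htn, hty, hbef⟩ :=
    first_cross (fun s => -f (n - s)) (-y) n
      (by
        intro t ht
        have h1 : n - (t + 1) + 1 = n - t := by omega
        have h2 := hstep (n - (t + 1)) (by omega)
        rw [h1] at h2
        rw [abs_sub_comm] at h2
        show |(-f (n - t)) - (-f (n - (t + 1)))| ≤ 1
        rwa [show (-f (n - t)) - (-f (n - (t + 1))) = -(f (n - t) - f (n - (t + 1))) by ring,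
          abs_neg])
      (by simpa using hn) (by simpa using h0)
  refine ⟨n - t, Nat.sub_le n t, by simpa using neg_injective hty, ?_⟩
  intro s hs1 hs2
  have hd : n - s < t := by omega
  have := hbef (n - s) hd
  have hns : n - (n - s) = s := by omega
  rw [hns] at this
  simpa using this

lemma find_first (P : ℕ → Prop) (n : ℕ) (hn : P n) :
    ∃ j, j ≤ n ∧ P j ∧ ∀ s < j, ¬ P s := by
  classical
  have hex : ∃ j, P j := ⟨n, hn⟩
  exact ⟨Nat.find hex, Nat.find_min' hex hn, Nat.find_spec hex,
    fun s hs => Nat.find_min hex hs⟩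

lemma find_last (P : ℕ → Prop) (n : ℕ) (h0 : P 0) :
    ∃ i, i ≤ n ∧ P i ∧ ∀ s, i < s → s ≤ n → ¬ P s := by
  classical
  exact ⟨Nat.findGreatest P n, Nat.findGreatest_le n,
    Nat.findGreatest_spec (Nat.zero_le n) h0,
    fun s hs1 hs2 => Nat.findGreatest_is_greatest hs1 hs2⟩

/-- Key combinatorial lemma along a path. -/
lemma key0 (y k : ℤ) (S : Set ℤ) (hk : k ∈ S)
    (hS : ∀ x x' : ℤ, x ∉ S → x' ∈ S → |x - x'| ≤ 1 → x' = k)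
    (n : ℕ) (f g : ℕ → ℤ)
    (hf : ∀ t < n, |f t - f (t + 1)| ≤ 1) (hg : ∀ t < n, |g t - g (t + 1)| ≤ 1)
    (hg0 : g 0 ∈ S) (hgn : g n ∈ S) (hf0 : f 0 ≤ y) (hfn : y ≤ f n) :
    ∃ i, i ≤ n ∧ ∃ j, j ≤ n ∧ g i = g j ∧ g i ∈ S ∧ f i ≤ y ∧ y ≤ f j := by
  classical
  by_cases hgood : ∃ t, t ≤ n ∧ f t = y ∧ g t ∈ S
  · obtain ⟨t, h1, h2, h3⟩ := hgood
    exact ⟨t, h1, t, h1, rfl, h3, le_of_eq h2, le_of_eq h2.symm⟩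
  push_neg at hgood
  obtain ⟨s1, hs1n, hs1, hbef⟩ := first_cross f y n hf hf0 hfn
  obtain ⟨t2, ht2n, ht2, haft⟩ := last_cross f y n hf hf0 hfn
  have hgs1 : g s1 ∉ S := hgood s1 hs1n hs1
  have hgt2 : g t2 ∉ S := hgood t2 ht2n ht2
  have hs1pos : 0 < s1 := by
    rcases Nat.eq_zero_or_pos s1 with h | h
    · exact absurd (h ▸ hg0) hgs1
    · exact h
  have ht2lt : t2 < n := by
    have : t2 ≠ n := fun h => hgt2 (h ▸ hgn)
    omega
  obtain ⟨j, hjn, hjP, hjmin⟩ := find_first (fun s => g s ∈ S ∧ t2 < s) n ⟨hgn, ht2lt⟩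
  obtain ⟨hjS, hjt2⟩ := hjP
  have hjprev : g (j - 1) ∉ S := by
    rcases eq_or_lt_of_le (Nat.succ_le_of_lt hjt2) with h | h
    · have he : j - 1 = t2 := by omega
      rw [he]; exact hgt2
    · intro hcon
      exact hjmin (j - 1) (by omega) ⟨hcon, by omega⟩
  have hgjk : g j = k := by
    have h1 : j - 1 + 1 = j := by omega
    have hstepj := hg (j - 1) (by omega)
    rw [h1] at hstepj
    exact hS _ _ hjprev hjS hstepj
  have hfj : y < f j := haft j hjt2 hjn
  obtain ⟨i, hin, hiS, himax⟩ := find_last (fun s => g s ∈ S) (s1 - 1) hg0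
  have hinext : g (i + 1) ∉ S := by
    rcases eq_or_lt_of_le (show i + 1 ≤ s1 by omega) with h | h
    · rw [h]; exact hgs1
    · exact himax (i + 1) (by omega) (by omega)
  have hgik : g i = k := by
    have hstepi : |g (i + 1) - g i| ≤ 1 := by
      rw [abs_sub_comm]; exact hg i (by omega)
    exact hS _ _ hinext hiS hstepi
  have hfi : f i < y := hbef i (by omega)
  exact ⟨i, by omega, j, hjn, by rw [hgik, hgjk], hiS, le_of_lt hfi, le_of_lt hfj⟩

/-- Extract componentwise steps from a `c₂`-chain. -/
lemma cAdj2_iff (p q : Pt) : cAdj 2 p q ↔ |p.1 - q.1| ≤ 1 ∧ |p.2 - q.2| ≤ 1 := by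
  simp [cAdj]

/-- From connectivity, produce a spanning column on a given side. -/
lemma span_col (X : Set Pt) (hconn : Conn 2 X) (y k : ℤ) (S : Set ℤ) (hk : k ∈ S)
    (hS : ∀ x x' : ℤ, x ∉ S → x' ∈ S → |x - x'| ≤ 1 → x' = k)
    (u v : Pt) (hu : u ∈ X) (hv : v ∈ X) (hu1 : u.1 ∈ S) (hv1 : v.1 ∈ S)
    (hu2 : u.2 ≤ y) (hv2 : y ≤ v.2) :
    ∃ a ∈ S, (a, y) ∈ Hc X := by
  obtain ⟨n, c, hc0, hcn, hcm, hcadj⟩ := hconn u hu v hv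
  have hadj : ∀ t < n, |(c t).1 - (c (t + 1)).1| ≤ 1 ∧ |(c t).2 - (c (t + 1)).2| ≤ 1 :=
    fun t ht => (cAdj2_iff _ _).1 (hcadj t ht)
  obtain ⟨i, hin, j, hjn, hgij, hgiS, hfi, hfj⟩ :=
    key0 y k S hk hS n (fun t => (c t).2) (fun t => (c t).1)
      (fun t ht => (hadj t ht).2) (fun t ht => (hadj t ht).1)
      (by show (c 0).1 ∈ S; rw [hc0]; exact hu1)
      (by show (c n).1 ∈ S; rw [hcn]; exact hv1)
      (by show (c 0).2 ≤ y; rw [hc0]; exact hu2)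
      (by show y ≤ (c n).2; rw [hcn]; exact hv2)
  refine ⟨(c i).1, hgiS, (mem_Hc_iff X _ y).2 ⟨(c i).2, (c j).2, by simpa using hcm i hin, ?_, hfi, hfj⟩⟩
  rw [hgij]; simpa using hcm j hjn

/-- From connectivity, produce a spanning row on a given side. -/
lemma span_row (X : Set Pt) (hconn : Conn 2 X) (y k : ℤ) (S : Set ℤ) (hk : k ∈ S)
    (hS : ∀ x x' : ℤ, x ∉ S → x' ∈ S → |x - x'| ≤ 1 → x' = k)
    (u v : Pt) (hu : u ∈ X) (hv : v ∈ X) (hu1 : u.2 ∈ S) (hv1 : v.2 ∈ S)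
    (hu2 : u.1 ≤ y) (hv2 : y ≤ v.1) :
    ∃ a ∈ S, (y, a) ∈ Hr X := by
  obtain ⟨n, c, hc0, hcn, hcm, hcadj⟩ := hconn u hu v hv
  have hadj : ∀ t < n, |(c t).1 - (c (t + 1)).1| ≤ 1 ∧ |(c t).2 - (c (t + 1)).2| ≤ 1 :=
    fun t ht => (cAdj2_iff _ _).1 (hcadj t ht)
  obtain ⟨i, hin, j, hjn, hgij, hgiS, hfi, hfj⟩ :=
    key0 y k S hk hS n (fun t => (c t).1) (fun t => (c t).2)
      (fun t ht => (hadj t ht).1) (fun t ht => (hadj t ht).2)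
      (by show (c 0).2 ∈ S; rw [hc0]; exact hu1)
      (by show (c n).2 ∈ S; rw [hcn]; exact hv1)
      (by show (c 0).1 ≤ y; rw [hc0]; exact hu2)
      (by show y ≤ (c n).1; rw [hcn]; exact hv2)
  refine ⟨(c i).2, hgiS, (mem_Hr_iff X y _).2 ⟨(c i).1, (c j).1, by simpa using hcm i hin, ?_, hfi, hfj⟩⟩
  rw [hgij]; simpa using hcm j hjn

lemma hS_le (k : ℤ) : ∀ x x' : ℤ, x ∉ {z : ℤ | z ≤ k} → x' ∈ {z : ℤ | z ≤ k} → |x - x'| ≤ 1 → x' = k := by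
  intro x x' hx hx' habs
  simp only [Set.mem_setOf_eq, not_le] at hx hx'
  rw [abs_le] at habs
  omega

lemma hS_ge (k : ℤ) : ∀ x x' : ℤ, x ∉ {z : ℤ | k ≤ z} → x' ∈ {z : ℤ | k ≤ z} → |x - x'| ≤ 1 → x' = k := by
  intro x x' hx hx' habs
  simp only [Set.mem_setOf_eq, not_le] at hx hx'
  rw [abs_le] at habs
  omega

lemma colConvex_HrHc (X : Set Pt) (hconn : Conn 2 X) : ColConvex (Hr (Hc X)) := by
  intro a b c k ha hc hab hbc
  rw [mem_Hr_iff] at ha hc ⊢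
  obtain ⟨a1, c1, ha1, hc1, ha1k, hkc1⟩ := ha
  obtain ⟨a2, c2, ha2, hc2, ha2k, hkc2⟩ := hc
  rw [mem_Hc_iff] at ha1 hc1 ha2 hc2
  obtain ⟨lo1, hi1, hlo1, hhi1, hlo1a, hahi1⟩ := ha1
  obtain ⟨lo2, hi2, hlo2, hhi2, hlo2c, hchi2⟩ := ha2
  obtain ⟨lo3, hi3, hlo3, hhi3, hlo3a, hahi3⟩ := hc1
  obtain ⟨lo4, hi4, hlo4, hhi4, hlo4c, hchi4⟩ := hc2
  obtain ⟨aL, haLS, haL⟩ :=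
    span_col X hconn b k {z : ℤ | z ≤ k} (le_refl k) (hS_le k)
      (a1, lo1) (a2, hi2) hlo1 hhi2 ha1k ha2k (by dsimp; omega) (by dsimp; omega)
  obtain ⟨aR, haRS, haR⟩ :=
    span_col X hconn b k {z : ℤ | k ≤ z} (le_refl k) (hS_ge k)
      (c1, lo3) (c2, hi4) hlo3 hhi4 hkc1 hkc2 (by dsimp; omega) (by dsimp; omega)
  exact ⟨aL, aR, haL, haR, haLS, haRS⟩

lemma rowConvex_HcHr (X : Set Pt) (hconn : Conn 2 X) : RowConvex (Hc (Hr X)) := by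
  intro a b c k ha hc hab hbc
  rw [mem_Hc_iff] at ha hc ⊢
  obtain ⟨a1, c1, ha1, hc1, ha1k, hkc1⟩ := ha
  obtain ⟨a2, c2, ha2, hc2, ha2k, hkc2⟩ := hc
  rw [mem_Hr_iff] at ha1 hc1 ha2 hc2
  obtain ⟨lo1, hi1, hlo1, hhi1, hlo1a, hahi1⟩ := ha1
  obtain ⟨lo2, hi2, hlo2, hhi2, hlo2c, hchi2⟩ := ha2
  obtain ⟨lo3, hi3, hlo3, hhi3, hlo3a, hahi3⟩ := hc1
  obtain ⟨lo4, hi4, hlo4, hhi4, hlo4c, hchi4⟩ := hc2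
  obtain ⟨aL, haLS, haL⟩ :=
    span_row X hconn b k {z : ℤ | z ≤ k} (le_refl k) (hS_le k)
      (lo1, a1) (hi2, a2) hlo1 hhi2 ha1k ha2k (by dsimp; omega) (by dsimp; omega)
  obtain ⟨aR, haRS, haR⟩ :=
    span_row X hconn b k {z : ℤ | k ≤ z} (le_refl k) (hS_ge k)
      (lo3, c1) (hi4, c2) hlo3 hhi4 hkc1 hkc2 (by dsimp; omega) (by dsimp; omega)
  exact ⟨aL, aR, haL, haR, haLS, haRS⟩

end Stmt15Aux

/-- if `X ⊆ ℤ²` is finite and `c₂`-connected, then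
`H_rc(X) = H_r(H_c(X)) = H_c(H_r(X))`. -/
theorem stmt15 (X : Set Pt) (hX : X.Finite) (hconn : Conn 2 X) :
    Hrc X = Hr (Hc X) ∧ Hrc X = Hc (Hr X) := by
  constructor
  · apply Set.Subset.antisymm
    · exact Hrc_min (rowConvex_Hr _) (colConvex_HrHc X hconn)
        ((subset_Hc X).trans (subset_Hr _))
    · exact Hr_min (rowConvex_Hrc X) (Hc_min (colConvex_Hrc X) (subset_Hrc X))
  · apply Set.Subset.antisymm
    · exact Hrc_min (rowConvex_HcHr X hconn) (colConvex_Hc _)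
        ((subset_Hr X).trans (subset_Hc _))
    · exact Hc_min (colConvex_Hrc X) (Hr_min (rowConvex_Hrc X) (subset_Hrc X))
end
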